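/- arXiv:2212.03751 — 2 statements merged into one kernel-verified Lean document; each statement's English description precedes it below -/
import Mathlib

section
/- Let N ≥ 1, τ ∈ (0,∞], λ ∈ ℝ, and let a_j, c_j : [0,τ) → ℂ (1 ≤ j ≤ N) be differentiable functions satisfying at every t ∈ [0,τ): the linear equations c_j' = 2i·Σ_{k≠j} (c_j − c_k)·V(a_j − a_k), the Bäcklund relations c_j·a_j' = 2λ + 2i·Σ_{k≠j} c_k·α(a_j − a_k), the strip condition −3δ/2 < Im a_j(t) < −δ/2 (all j), and the distinctness condition a_j(t) ≠ a_k(t) (all j ≠ k). Define D_j(t) := c_j(t)·(λ − i·Σ_{k=1}^N conj(c_k(t))·α(a_j(t) − conj(a_k(t)) + iδ)). Then each D_j is differentiable on [0,τ) and satisfies the closed linear system D_j' = 2i·Σ_{k≠j} (D_j − D_k)·V(a_j − a_k) − 2i·Σ_{k=1}^N (D_j − conj(D_k))·V(a_j − conj(a_k) + iδ) for j = 1,…,N. -/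
open MeasureTheory Filter Finset ComplexConjugate

noncomputable section

/-- `α(z) = (π/(2δ)) coth(πz/(2δ))`. -/
def cmAlpha (δ : ℝ) (z : ℂ) : ℂ :=
  ((Real.pi / (2 * δ) : ℝ) : ℂ) *
    (Complex.cosh ((Real.pi : ℂ) * z / (2 * (δ : ℂ))) /
     Complex.sinh ((Real.pi : ℂ) * z / (2 * (δ : ℂ))))

/-- `V(z) = (π/(2δ))² / sinh(πz/(2δ))²`. -/
def cmV (δ : ℝ) (z : ℂ) : ℂ :=
  ((Real.pi / (2 * δ) : ℝ) : ℂ) ^ 2 / Complex.sinh ((Real.pi : ℂ) * z / (2 * (δ : ℂ))) ^ 2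

/-- `V'(z) = -2 (π/(2δ))³ cosh(πz/(2δ)) / sinh(πz/(2δ))³`. -/
def cmV' (δ : ℝ) (z : ℂ) : ℂ :=
  -2 * ((Real.pi / (2 * δ) : ℝ) : ℂ) ^ 3 *
    Complex.cosh ((Real.pi : ℂ) * z / (2 * (δ : ℂ))) /
    Complex.sinh ((Real.pi : ℂ) * z / (2 * (δ : ℂ))) ^ 3

/-- real hyperbolic cotangent -/
def rcoth (y : ℝ) : ℝ := Real.cosh y / Real.sinh y

/-- `(T g)(x) = L`: the principal-value limit defining the operator `T` exists and equals `L`. -/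
def HasPV (δ : ℝ) (g : ℝ → ℂ) (x : ℝ) (L : ℂ) : Prop :=
  Tendsto (fun ε : ℝ =>
      (1 / (2 * (δ : ℂ))) *
        ∫ x' in {x' : ℝ | ε ≤ |x' - x|},
          ((rcoth (Real.pi * (x' - x) / (2 * δ)) : ℝ) : ℂ) * g x')
    (nhdsWithin 0 (Set.Ioi 0)) (nhds L)

/-- kernel of the operator `T̃`. -/
def TtKer (δ : ℝ) (x x' : ℝ) : ℝ := Real.tanh (Real.pi * (x' - x) / (2 * δ))

/-- the operator `T̃`. -/
def Ttilde (δ : ℝ) (g : ℝ → ℂ) (x : ℝ) : ℂ :=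
  (1 / (2 * (δ : ℂ))) * ∫ x', ((TtKer δ x x' : ℝ) : ℂ) * g x'

/-- `x' ↦ ∂_{x'} |w(x',t)|²`. -/
def sqAbsDeriv (w : ℝ → ℝ → ℂ) (t x' : ℝ) : ℝ :=
  deriv (fun y => ‖w y t‖ ^ 2) x'

/-- The intermediate mixed Manakov (IMM) system holds for the pair `(u,v)` at the point `(x,t)`,
including existence of the relevant principal-value limits and integrals. -/
def IMMat (δ : ℝ) (u v : ℝ → ℝ → ℂ) (x t : ℝ) : Prop :=
  ∃ Tu Tv : ℂ,
    HasPV δ (fun x' => ((sqAbsDeriv u t x' : ℝ) : ℂ)) x Tu ∧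
    HasPV δ (fun x' => ((sqAbsDeriv v t x' : ℝ) : ℂ)) x Tv ∧
    Integrable (fun x' => ((TtKer δ x x' : ℝ) : ℂ) * ((sqAbsDeriv u t x' : ℝ) : ℂ)) ∧
    Integrable (fun x' => ((TtKer δ x x' : ℝ) : ℂ) * ((sqAbsDeriv v t x' : ℝ) : ℂ)) ∧
    Complex.I * deriv (fun s => u x s) t =
      deriv (fun y => deriv (fun z => u z t) y) x
        + u x t * (Complex.I * ((sqAbsDeriv u t x : ℝ) : ℂ) + Tu)
        - u x t * Ttilde δ (fun x' => ((sqAbsDeriv v t x' : ℝ) : ℂ)) x ∧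
    Complex.I * deriv (fun s => v x s) t =
      deriv (fun y => deriv (fun z => v z t) y) x
        + v x t * (Complex.I * ((sqAbsDeriv v t x : ℝ) : ℂ) - Tv)
        + v x t * Ttilde δ (fun x' => ((sqAbsDeriv u t x' : ℝ) : ℂ)) x

/-- the time interval `[0, τ)` for `τ ∈ (0, ∞]`. -/
def timeDom (τ : ENNReal) : Set ℝ := {t : ℝ | 0 ≤ t ∧ ENNReal.ofReal t < τ}

/-- the quantity `D_j(t)` associated with the constraints. -/
def Dfun (δ : ℝ) (lam : ℝ) {N : ℕ} (a c : Fin N → ℝ → ℂ) (j : Fin N) (t : ℝ) : ℂ :=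
  c j t * ((lam : ℂ) - Complex.I * ∑ k, conj (c k t) *
    cmAlpha δ (a j t - conj (a k t) + Complex.I * (δ : ℂ)))

/-!
With `κ = π/(2δ)` one has `V = α² - κ² = -α'`, and the addition law of `coth` is a quadratic
relation between `α x`, `α y` and `α (x - y)`. It yields the three-term identities
`V (x - y) (α x - α y) = V y (α x - α (x - y)) = -V x (α (x - y) + α y)`.
Differentiate `D_j = c_j P_j` by the product rule and replace `c_j a_j'` and `conj (c_k a_k')` by
the Bäcklund relations. The difference from the claimed right-hand side then becomes two double sums
over `(k, m)`. After swapping `k` and `m` in one term of each, the three-term identities kill the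
off-diagonal summands, and the two diagonal sums cancel.
-/

section CothKernel

open Complex

variable {δ : ℝ}

-- Junk values (`sinh 0 = 0`); they let the sums over `k ≠ j` run over all `k`.
lemma cmAlpha_zero : cmAlpha δ 0 = 0 := by simp [cmAlpha]

lemma cmV_zero : cmV δ 0 = 0 := by simp [cmV]

lemma cmAlpha_neg (z : ℂ) : cmAlpha δ (-z) = -cmAlpha δ z := by
  simp [cmAlpha, mul_neg, neg_div, div_neg]

lemma cmV_neg (z : ℂ) : cmV δ (-z) = cmV δ z := by
  simp [cmV, mul_neg, neg_div]

lemma conj_cmAlpha (z : ℂ) : conj (cmAlpha δ z) = cmAlpha δ (conj z) := by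
  simp [cmAlpha, ← Complex.cosh_conj, ← Complex.sinh_conj, map_ofNat]

lemma conj_cmV (z : ℂ) : conj (cmV δ z) = cmV δ (conj z) := by
  simp [cmV, ← Complex.sinh_conj, map_ofNat]

lemma sinh_pi_mul_div_ne_zero (hδ : 0 < δ) {z : ℂ} (hz : z ≠ 0) (him : |z.im| < 2 * δ) :
    sinh (Real.pi * z / (2 * δ)) ≠ 0 := by
  intro h
  obtain ⟨k, hk⟩ := Complex.sin_eq_zero_iff.1 (by rw [Complex.sin_mul_I, h, zero_mul] :
    sin (Real.pi * z / (2 * δ) * I) = 0)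
  have hz' : z = -(2 * δ * k : ℝ) * I := by
    have hδ' : (δ : ℂ) ≠ 0 := by exact_mod_cast hδ.ne'
    field_simp at hk
    push_cast
    linear_combination (-I) * hk + z * I_sq
  have hk0 : k = 0 := by
    rw [hz'] at him
    simp only [neg_mul, neg_im, mul_im, ofReal_re, I_im, mul_one, ofReal_im, I_re, mul_zero,
      add_zero, abs_neg, abs_mul, abs_of_pos (by positivity : (0 : ℝ) < 2 * δ)] at him
    by_contra hk0
    have : (1 : ℝ) ≤ |(k : ℝ)| := by exact_mod_cast Int.one_le_abs hk0
    nlinarith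
  exact hz (by simp [hz', hk0])

lemma cmV_eq_cmAlpha_sq_sub {z : ℂ} (hz : sinh (Real.pi * z / (2 * δ)) ≠ 0) :
    cmV δ z = cmAlpha δ z ^ 2 - ((Real.pi / (2 * δ) : ℝ) : ℂ) ^ 2 := by
  have h := cosh_sq_sub_sinh_sq (Real.pi * z / (2 * δ))
  rw [cmV, cmAlpha]
  field_simp
  linear_combination -((Real.pi / (2 * δ) : ℝ) : ℂ) ^ 2 * h

lemma cmAlpha_add_mul {x y : ℂ} (hx : sinh (Real.pi * x / (2 * δ)) ≠ 0)
    (hy : sinh (Real.pi * y / (2 * δ)) ≠ 0) (hxy : sinh (Real.pi * (x + y) / (2 * δ)) ≠ 0) :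
    cmAlpha δ (x + y) * (cmAlpha δ x + cmAlpha δ y) =
      cmAlpha δ x * cmAlpha δ y + ((Real.pi / (2 * δ) : ℝ) : ℂ) ^ 2 := by
  have harg : Real.pi * (x + y) / (2 * δ) = Real.pi * x / (2 * δ) + Real.pi * y / (2 * δ) := by
    ring
  rw [cmAlpha, cmAlpha, cmAlpha, harg]
  rw [harg] at hxy
  generalize Real.pi * x / (2 * δ) = u at *
  generalize Real.pi * y / (2 * δ) = v at *
  field_simp
  rw [sinh_add, cosh_add]
  ring

lemma hasDerivAt_cmAlpha {z : ℂ} (hz : sinh (Real.pi * z / (2 * δ)) ≠ 0) :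
    HasDerivAt (cmAlpha δ) (-cmV δ z) z := by
  have hlin : HasDerivAt (fun w : ℂ => Real.pi * w / (2 * δ)) (Real.pi / (2 * δ)) z := by
    simpa using ((hasDerivAt_id z).const_mul (Real.pi : ℂ)).div_const (2 * δ : ℂ)
  have h := (((hasDerivAt_cosh _).comp z hlin).div ((hasDerivAt_sinh _).comp z hlin) hz).const_mul
    ((Real.pi / (2 * δ) : ℝ) : ℂ)
  refine (h : HasDerivAt (cmAlpha δ) _ z).congr_deriv ?_
  rw [cmV_eq_cmAlpha_sq_sub hz, cmAlpha, Function.comp_apply, Function.comp_apply]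
  push_cast
  field_simp
  ring

lemma cmV_mul_cmAlpha_sub_eq_neg {x y z : ℂ} (hxyz : x - y = z)
    (hx : sinh (Real.pi * x / (2 * δ)) ≠ 0) (hy : sinh (Real.pi * y / (2 * δ)) ≠ 0)
    (hz : sinh (Real.pi * z / (2 * δ)) ≠ 0) :
    cmV δ z * (cmAlpha δ x - cmAlpha δ y) = -(cmV δ x * (cmAlpha δ z + cmAlpha δ y)) := by
  have h := cmAlpha_add_mul hz hy (by rwa [← hxyz, sub_add_cancel])
  rw [← hxyz, sub_add_cancel] at h
  rw [cmV_eq_cmAlpha_sq_sub hx, cmV_eq_cmAlpha_sq_sub hz, ← hxyz]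
  linear_combination (cmAlpha δ x + cmAlpha δ (x - y)) * h

lemma cmV_mul_cmAlpha_sub_eq {x y z : ℂ} (hxyz : x - y = z)
    (hx : sinh (Real.pi * x / (2 * δ)) ≠ 0) (hy : sinh (Real.pi * y / (2 * δ)) ≠ 0)
    (hz : sinh (Real.pi * z / (2 * δ)) ≠ 0) :
    cmV δ z * (cmAlpha δ x - cmAlpha δ y) = cmV δ y * (cmAlpha δ x - cmAlpha δ z) := by
  have h := cmAlpha_add_mul hz hy (by rwa [← hxyz, sub_add_cancel])
  rw [← hxyz, sub_add_cancel] at h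
  rw [cmV_eq_cmAlpha_sq_sub hy, cmV_eq_cmAlpha_sq_sub hz, ← hxyz]
  linear_combination (cmAlpha δ (x - y) - cmAlpha δ y) * h

end CothKernel

section FiniteSums

open Complex

variable {ι : Type*} [Fintype ι]

lemma sum_sum_add_transpose {M : Type*} [AddCommMonoid M] (f g : ι → ι → M) :
    ∑ k, ∑ m, (f k m + g k m) = ∑ k, ∑ m, (f k m + g m k) := by
  simp only [Finset.sum_add_distrib]
  rw [Finset.sum_comm (f := g)]

lemma sum_sum_conj_terms_eq (d b w : ι → ℂ) (Ab Vb : ι → ι → ℂ)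
    (hVb : ∀ k m, Vb k m = Vb m k) (hVb0 : ∀ k, Vb k k = 0) (hAb0 : ∀ k, Ab k k = 0)
    (hkey : ∀ k m, k ≠ m → Vb k m * (b m - b k) = w k * (b m - Ab k m)) :
    ∑ k, ∑ m, ((d k - d m) * Vb k m * b k + w k * d m * (Ab k m - b m)) =
      -∑ k, d k * w k * b k := by
  calc ∑ k, ∑ m, ((d k - d m) * Vb k m * b k + w k * d m * (Ab k m - b m))
      = ∑ k, ∑ m, ((w k * d m * (Ab k m - b m) - d m * Vb k m * b k) + d k * Vb k m * b k) :=
        Finset.sum_congr rfl fun _ _ => Finset.sum_congr rfl fun _ _ => by ring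
    _ = ∑ k, ∑ m, ((w k * d m * (Ab k m - b m) - d m * Vb k m * b k) + d m * Vb m k * b m) :=
        sum_sum_add_transpose _ _
    _ = ∑ k, -(d k * w k * b k) := Finset.sum_congr rfl fun k _ => by
        rw [Finset.sum_eq_single k (fun m _ hkm => by
          rw [hVb m k]
          linear_combination d m * hkey k m hkm.symm) (by simp), hAb0, hVb0]
        ring
    _ = -∑ k, d k * w k * b k := Finset.sum_neg_distrib _

lemma sum_sum_mixed_terms_eq (j : ι) (c d w A V : ι → ℂ) (B : ι → ι → ℂ) (hA : A j = 0)
    (hkey : ∀ k m, m ≠ j → V m * (B j k - B m k) = -(w k * (A m + B m k))) :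
    ∑ k, ∑ m, (d k * w k * c m * (A m + B m k) + c k * V k * d m * (B j m - B k m)) =
      c j * ∑ k, d k * w k * B j k := by
  rw [sum_sum_add_transpose, Finset.mul_sum]
  refine Finset.sum_congr rfl fun k _ => ?_
  rw [Finset.sum_eq_single j (fun m _ hm => by linear_combination c m * d k * hkey k m hm)
    (by simp), hA]
  ring

/- The algebraic core at a fixed time: `c`, `d = conj c` are the weights, `x = a_j'`, `y = conj a'`,
`D_j = c_j P_j` and `conj D_k = d_k Q_k`; `A`, `V` are evaluated at `a_k - a_m`, `Ab`, `Vb` at the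
conjugate differences and `B`, `W` at `a_k - conj a_m + iδ`. -/
lemma deriv_eq_linear_system (j : ι) (lam cj' x : ℂ) (c d d' y P Q : ι → ℂ)
    (A V Ab Vb B W : ι → ι → ℂ)
    (hP : ∀ k, P k = lam - I * ∑ m, d m * B k m)
    (hQ : ∀ k, Q k = lam - I * ∑ m, c m * B m k)
    (hc' : cj' = 2 * I * ∑ k, (c j - c k) * V j k)
    (hd' : ∀ k, d' k = -(2 * I) * ∑ m, (d k - d m) * Vb k m)
    (hx : c j * x = 2 * lam + 2 * I * ∑ m, c m * A j m)
    (hy : ∀ k, d k * y k = 2 * lam - 2 * I * ∑ m, d m * Ab k m)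
    (hVb : ∀ k m, Vb k m = Vb m k) (hVb0 : ∀ k, Vb k k = 0) (hAb0 : ∀ k, Ab k k = 0)
    (hA0 : A j j = 0)
    (hconj : ∀ k m, k ≠ m → Vb k m * (B j m - B j k) = W j k * (B j m - Ab k m))
    (hmixed : ∀ k m, m ≠ j → V j m * (B j k - B m k) = -(W j k * (A j m + B m k))) :
    cj' * P j - c j * (I * ∑ k, (d' k * B j k - d k * W j k * (x - y k))) =
      2 * I * ∑ k, (c j * P j - c k * P k) * V j k
        - 2 * I * ∑ k, (c j * P j - d k * Q k) * W j k := by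
  have hyP : ∀ k, d k * y k - 2 * P j = -(2 * I) * ∑ m, d m * (Ab k m - B j m) := by
    intro k
    rw [hy, hP]
    simp only [mul_sub, Finset.sum_sub_distrib]
    ring
  have hxQ : ∀ k, c j * x - 2 * Q k = 2 * I * ∑ m, c m * (A j m + B m k) := by
    intro k
    rw [hx, hQ]
    simp only [mul_add, Finset.sum_add_distrib]
    ring
  have hPP : ∀ k, P j - P k = -I * ∑ m, d m * (B j m - B k m) := by
    intro k
    rw [hP, hP]
    simp only [mul_sub, Finset.sum_sub_distrib]
    ring
  have hX : ∑ k, (d' k * B j k + W j k * (d k * y k - 2 * P j)) =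
      2 * I * ∑ k, d k * W j k * B j k := by
    calc _ = -(2 * I) * ∑ k, ∑ m, ((d k - d m) * Vb k m * B j k
          + W j k * d m * (Ab k m - B j m)) := by
          rw [Finset.mul_sum]
          refine Finset.sum_congr rfl fun k _ => ?_
          simp only [hd', hyP, Finset.mul_sum, Finset.sum_mul, ← Finset.sum_add_distrib]
          exact Finset.sum_congr rfl fun m _ => by ring
      _ = _ := by
          rw [sum_sum_conj_terms_eq d (B j) (W j) Ab Vb hVb hVb0 hAb0 hconj]
          ring
  have hY : ∑ k, (d k * W j k * (c j * x - 2 * Q k) - 2 * (c k * V j k * (P j - P k))) =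
      2 * I * (c j * ∑ k, d k * W j k * B j k) := by
    calc _ = 2 * I * ∑ k, ∑ m, (d k * W j k * c m * (A j m + B m k)
          + c k * V j k * d m * (B j m - B k m)) := by
          rw [Finset.mul_sum]
          refine Finset.sum_congr rfl fun k _ => ?_
          simp only [hxQ, hPP, Finset.mul_sum, ← Finset.sum_sub_distrib]
          exact Finset.sum_congr rfl fun m _ => by ring
      _ = _ := by
          rw [sum_sum_mixed_terms_eq j c d (W j) (A j) (V j) B hA0 hmixed]
  rw [hc']
  linear_combination (norm := skip) (-I * c j) * hX + I * hY
  simp only [Finset.mul_sum, Finset.sum_mul, ← Finset.sum_sub_distrib, ← Finset.sum_add_distrib]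
  exact Finset.sum_eq_zero fun k _ => by ring

end FiniteSums

section Constraints

open Complex

variable {δ : ℝ}

lemma sinh_ne_zero_of_mem_strip_mixed (hδ : 0 < δ) {p q : ℂ}
    (hp : p.im ∈ Set.Ioo (-(3 * δ) / 2) (-δ / 2)) (hq : q.im ∈ Set.Ioo (-(3 * δ) / 2) (-δ / 2)) :
    sinh (Real.pi * (p - conj q + I * δ) / (2 * δ)) ≠ 0 := by
  have him : (p - conj q + I * δ).im = p.im + q.im + δ := by simp
  refine sinh_pi_mul_div_ne_zero hδ (fun h => ?_) ?_
  · have := congrArg Complex.im h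
    rw [him, zero_im] at this
    linarith [hp.2, hq.2]
  · rw [him, abs_lt]
    constructor <;> linarith [hp.1, hp.2, hq.1, hq.2]

lemma sinh_ne_zero_of_mem_strip_sub (hδ : 0 < δ) {p q : ℂ}
    (hp : p.im ∈ Set.Ioo (-(3 * δ) / 2) (-δ / 2)) (hq : q.im ∈ Set.Ioo (-(3 * δ) / 2) (-δ / 2))
    (hpq : p ≠ q) : sinh (Real.pi * (p - q) / (2 * δ)) ≠ 0 := by
  refine sinh_pi_mul_div_ne_zero hδ (sub_ne_zero.2 hpq) ?_
  rw [sub_im, abs_lt]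
  constructor <;> linarith [hp.1, hp.2, hq.1, hq.2]

lemma sinh_ne_zero_of_mem_strip_conj_sub (hδ : 0 < δ) {p q : ℂ}
    (hp : p.im ∈ Set.Ioo (-(3 * δ) / 2) (-δ / 2)) (hq : q.im ∈ Set.Ioo (-(3 * δ) / 2) (-δ / 2))
    (hpq : p ≠ q) : sinh (Real.pi * (conj p - conj q) / (2 * δ)) ≠ 0 := by
  refine sinh_pi_mul_div_ne_zero hδ (sub_ne_zero.2 ((starRingEnd ℂ).injective.ne hpq)) ?_
  rw [sub_im, conj_im, conj_im, abs_lt]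
  constructor <;> linarith [hp.1, hp.2, hq.1, hq.2]

lemma conj_Dfun (lam : ℝ) {N : ℕ} (a c : Fin N → ℝ → ℂ) (k : Fin N) (t : ℝ) :
    conj (Dfun δ lam a c k t) =
      conj (c k t) * (lam - I * ∑ m, c m t * cmAlpha δ (a m t - conj (a k t) + I * δ)) := by
  have hodd : ∀ m, conj (cmAlpha δ (a k t - conj (a m t) + I * δ)) =
      -cmAlpha δ (a m t - conj (a k t) + I * δ) := fun m => by
    rw [conj_cmAlpha, ← cmAlpha_neg]
    congr 1
    simp only [map_add, map_sub, map_mul, conj_conj, conj_I, conj_ofReal]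
    ring
  simp only [Dfun, map_mul, map_sub, map_sum, conj_ofReal, conj_I, conj_conj, hodd,
    mul_neg, Finset.sum_neg_distrib]
  ring

lemma hasDerivWithinAt_Dfun (lam : ℝ) {N : ℕ} {a c : Fin N → ℝ → ℂ} {a' c' : Fin N → ℂ}
    {s : Set ℝ} {t : ℝ} (j : Fin N) (ha : ∀ k, HasDerivWithinAt (a k) (a' k) s t)
    (hc : ∀ k, HasDerivWithinAt (c k) (c' k) s t)
    (hreg : ∀ k, sinh (Real.pi * (a j t - conj (a k t) + I * δ) / (2 * δ)) ≠ 0) :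
    HasDerivWithinAt (Dfun δ lam a c j)
      (c' j * (lam - I * ∑ k, conj (c k t) * cmAlpha δ (a j t - conj (a k t) + I * δ))
        - c j t * (I * ∑ k, (conj (c' k) * cmAlpha δ (a j t - conj (a k t) + I * δ)
          - conj (c k t) * cmV δ (a j t - conj (a k t) + I * δ) * (a' j - conj (a' k))))) s t := by
  have hterm : ∀ k, HasDerivWithinAt
      (fun s => conj (c k s) * cmAlpha δ (a j s - conj (a k s) + I * δ))
      (conj (c' k) * cmAlpha δ (a j t - conj (a k t) + I * δ)
        - conj (c k t) * cmV δ (a j t - conj (a k t) + I * δ) * (a' j - conj (a' k))) s t := by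
    intro k
    have harg := (((ha j).sub (ha k).star).add_const (I * δ))
    refine ((hc k).star.mul ((hasDerivAt_cmAlpha (hreg k)).comp_hasDerivWithinAt t harg))
      |>.congr_deriv ?_
    simp only [star_def, Function.comp_apply, Pi.sub_apply]
    ring
  exact ((hc j).mul ((hasDerivWithinAt_const t s _).sub
    ((HasDerivWithinAt.fun_sum fun k _ => hterm k).const_mul I))).congr_deriv (by
      simp only [Pi.sub_apply]
      ring)

lemma Dfun_deriv_eq_linear_system (hδ : 0 < δ) (lam : ℝ) {N : ℕ} (a c : Fin N → ℝ → ℂ)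
    (a' c' : Fin N → ℂ) (t : ℝ) (j : Fin N)
    (hc' : ∀ k, c' k = 2 * I * ∑ m ∈ univ.erase k, (c k t - c m t) * cmV δ (a k t - a m t))
    (hB : ∀ k, c k t * a' k =
      2 * (lam : ℂ) + 2 * I * ∑ m ∈ univ.erase k, c m t * cmAlpha δ (a k t - a m t))
    (hstrip : ∀ k, (a k t).im ∈ Set.Ioo (-(3 * δ) / 2) (-δ / 2))
    (hdist : ∀ k m, k ≠ m → a k t ≠ a m t) :
    c' j * (lam - I * ∑ k, conj (c k t) * cmAlpha δ (a j t - conj (a k t) + I * δ))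
        - c j t * (I * ∑ k, (conj (c' k) * cmAlpha δ (a j t - conj (a k t) + I * δ)
          - conj (c k t) * cmV δ (a j t - conj (a k t) + I * δ) * (a' j - conj (a' k)))) =
      2 * I * ∑ k ∈ univ.erase j,
          (Dfun δ lam a c j t - Dfun δ lam a c k t) * cmV δ (a j t - a k t)
        - 2 * I * ∑ k, (Dfun δ lam a c j t - conj (Dfun δ lam a c k t)) *
          cmV δ (a j t - conj (a k t) + I * δ) := by
  have hmix k m := sinh_ne_zero_of_mem_strip_mixed hδ (hstrip k) (hstrip m)
  have hc'_univ k : c' k = 2 * I * ∑ m, (c k t - c m t) * cmV δ (a k t - a m t) := by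
    rw [hc' k, Finset.sum_erase _ (by simp [cmV_zero])]
  have hB_univ k :
      c k t * a' k = 2 * (lam : ℂ) + 2 * I * ∑ m, c m t * cmAlpha δ (a k t - a m t) := by
    rw [hB k, Finset.sum_erase _ (by simp [cmAlpha_zero])]
  rw [Finset.sum_erase _ (by simp)]
  simp only [conj_Dfun]
  refine deriv_eq_linear_system j lam (c' j) (a' j) (fun k => c k t) (fun k => conj (c k t))
    (fun k => conj (c' k)) (fun k => conj (a' k))
    (fun k => lam - I * ∑ m, conj (c m t) * cmAlpha δ (a k t - conj (a m t) + I * δ))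
    (fun k => lam - I * ∑ m, c m t * cmAlpha δ (a m t - conj (a k t) + I * δ))
    (fun k m => cmAlpha δ (a k t - a m t)) (fun k m => cmV δ (a k t - a m t))
    (fun k m => cmAlpha δ (conj (a k t) - conj (a m t)))
    (fun k m => cmV δ (conj (a k t) - conj (a m t)))
    (fun k m => cmAlpha δ (a k t - conj (a m t) + I * δ))
    (fun k m => cmV δ (a k t - conj (a m t) + I * δ))
    (fun _ => rfl) (fun _ => rfl) (hc'_univ j) (fun k => ?_) (hB_univ j) (fun k => ?_)
    (fun k m => by simp only [← neg_sub (conj (a k t)), cmV_neg])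
    (fun k => by simp [cmV_zero]) (fun k => by simp [cmAlpha_zero]) (by simp [cmAlpha_zero])
    (fun k m hkm => cmV_mul_cmAlpha_sub_eq (by ring) (hmix j m) (hmix j k)
      (sinh_ne_zero_of_mem_strip_conj_sub hδ (hstrip k) (hstrip m) (hdist k m hkm)))
    (fun k m hm => cmV_mul_cmAlpha_sub_eq_neg (by ring) (hmix j k) (hmix m k)
      (sinh_ne_zero_of_mem_strip_sub hδ (hstrip j) (hstrip m) (hdist j m hm.symm)))
  · rw [hc'_univ k]
    simp only [map_mul, map_sum, map_sub, map_ofNat, conj_I, conj_cmV]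
    ring
  · rw [← map_mul, hB_univ k]
    simp only [map_add, map_mul, map_sum, map_ofNat, conj_I, conj_ofReal, conj_cmAlpha, map_sub]
    ring

end Constraints

theorem imm_Dj_linear_system_general
    (δ : ℝ) (hδ : 0 < δ) (N : ℕ)
    (τ : ENNReal) (lam : ℝ)
    (a a' c : Fin N → ℝ → ℂ)
    (ha' : ∀ j, ∀ t ∈ timeDom τ, HasDerivWithinAt (a j) (a' j t) (timeDom τ) t)
    (hc : ∀ j, ∀ t ∈ timeDom τ, HasDerivWithinAt (c j)
      (2 * Complex.I * ∑ k ∈ univ.erase j, (c j t - c k t) * cmV δ (a j t - a k t))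
      (timeDom τ) t)
    (hB : ∀ j, ∀ t ∈ timeDom τ, c j t * a' j t =
      2 * (lam : ℂ) + 2 * Complex.I * ∑ k ∈ univ.erase j, c k t * cmAlpha δ (a j t - a k t))
    (hstrip : ∀ t ∈ timeDom τ, ∀ j, -(3 * δ) / 2 < (a j t).im ∧ (a j t).im < -δ / 2)
    (hdist : ∀ t ∈ timeDom τ, ∀ j k, j ≠ k → a j t ≠ a k t) :
    ∀ j, ∀ t ∈ timeDom τ,
      HasDerivWithinAt (Dfun δ lam a c j)
        (2 * Complex.I * ∑ k ∈ univ.erase j,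
            (Dfun δ lam a c j t - Dfun δ lam a c k t) * cmV δ (a j t - a k t)
          - 2 * Complex.I * ∑ k,
            (Dfun δ lam a c j t - conj (Dfun δ lam a c k t)) *
              cmV δ (a j t - conj (a k t) + Complex.I * (δ : ℂ)))
        (timeDom τ) t := by
  intro j t ht
  have hderiv := hasDerivWithinAt_Dfun lam j (fun k => ha' k t ht) (fun k => hc k t ht)
    (fun k => sinh_ne_zero_of_mem_strip_mixed hδ (hstrip t ht j) (hstrip t ht k))
  exact hderiv.congr_deriv <|
    Dfun_deriv_eq_linear_system hδ lam a c (fun k => a' k t) _ t j (fun _ => rfl)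
      (fun k => hB k t ht) (hstrip t ht) (hdist t ht)

/-- the constraint quantities `D_j` are differentiable and satisfy a closed linear
system of ODEs. -/
theorem imm_Dj_linear_system
    (δ : ℝ) (hδ : 0 < δ) (N : ℕ) (hN : 1 ≤ N)
    (τ : ENNReal) (hτ : 0 < τ) (lam : ℝ)
    (a a' c : Fin N → ℝ → ℂ)
    (ha' : ∀ j, ∀ t ∈ timeDom τ, HasDerivWithinAt (a j) (a' j t) (timeDom τ) t)
    (hc : ∀ j, ∀ t ∈ timeDom τ, HasDerivWithinAt (c j)
      (2 * Complex.I * ∑ k ∈ univ.erase j, (c j t - c k t) * cmV δ (a j t - a k t))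
      (timeDom τ) t)
    (hB : ∀ j, ∀ t ∈ timeDom τ, c j t * a' j t =
      2 * (lam : ℂ) + 2 * Complex.I * ∑ k ∈ univ.erase j, c k t * cmAlpha δ (a j t - a k t))
    (hstrip : ∀ t ∈ timeDom τ, ∀ j, -(3 * δ) / 2 < (a j t).im ∧ (a j t).im < -δ / 2)
    (hdist : ∀ t ∈ timeDom τ, ∀ j k, j ≠ k → a j t ≠ a k t) :
    ∀ j, ∀ t ∈ timeDom τ,
      HasDerivWithinAt (Dfun δ lam a c j)
        (2 * Complex.I * ∑ k ∈ univ.erase j,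
            (Dfun δ lam a c j t - Dfun δ lam a c k t) * cmV δ (a j t - a k t)
          - 2 * Complex.I * ∑ k,
            (Dfun δ lam a c j t - conj (Dfun δ lam a c k t)) *
              cmV δ (a j t - conj (a k t) + Complex.I * (δ : ℂ)))
        (timeDom τ) t :=
  imm_Dj_linear_system_general δ hδ N τ lam a a' c ha' hc hB hstrip hdist
end
end

section
/- Let λ ∈ ℝ with λ ≠ 0, and let a₁, a₂, c₁, c₂ ∈ ℂ satisfy the strip condition −3δ/2 < Im a_j < −δ/2 (j = 1,2), Im c₁ ≠ 0, and the two constraints c₁·(λ − i·conj(c₁)·α(a₁ − conj(a₁) + iδ) − i·conj(c₂)·α(a₁ − conj(a₂) + iδ)) + 1 = 0 and c₂·(λ − i·conj(c₁)·α(a₂ − conj(a₁) + iδ) − i·conj(c₂)·α(a₂ − conj(a₂) + iδ)) + 1 = 0. Then d := c₁ + c₂ is real (i.e. Im(c₁ + c₂) = 0), and λ = −Re(c₁·(conj(c₁) − d)·α(a₁ − conj(a₂) + iδ))/Im(c₁). -/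
/-!
Write `A_jk = α(a_j - ā_k + iδ)`. The imaginary part of the `j`-th constraint
`c_j (λ - i ∑ₖ c̄ₖ A_jk) + 1 = 0` is `λ Im c_j = Re ∑ₖ c_j c̄ₖ A_jk`. Since `α` is odd with real
coefficients, `conj A_jk = -A_kj`, so the matrix `c_j c̄ₖ A_jk` is skew-Hermitian: its entries
have total real part zero, which gives `λ Im (c₁ + c₂) = 0`, and its diagonal entries are
imaginary, which leaves `λ Im c₁ = Re (c₁ c̄₂ A₁₂)` with `c̄₂ = d - c̄₁`.
-/

open MeasureTheory Filter Finset ComplexConjugate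

noncomputable section

lemma cmAlpha_conj (δ : ℝ) (z : ℂ) : conj (cmAlpha δ z) = -cmAlpha δ (-conj z) := by
  have harg : conj ((Real.pi : ℂ) * z / (2 * (δ : ℂ))) =
      -((Real.pi : ℂ) * (-conj z) / (2 * (δ : ℂ))) := by
    simp only [map_div₀, map_mul, Complex.conj_ofReal, map_ofNat]
    ring
  unfold cmAlpha
  rw [map_mul, map_div₀, Complex.conj_ofReal, ← Complex.cosh_conj, ← Complex.sinh_conj, harg,
    Complex.cosh_neg, Complex.sinh_neg, div_neg, mul_neg]

lemma cmAlpha_conj_sub_conj_add_I (δ : ℝ) (a b : ℂ) :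
    conj (cmAlpha δ (a - conj b + Complex.I * δ)) = -cmAlpha δ (b - conj a + Complex.I * δ) := by
  rw [cmAlpha_conj]
  congr 2
  simp only [map_add, map_sub, map_mul, Complex.conj_conj, Complex.conj_I, Complex.conj_ofReal]
  ring

lemma Complex.re_eq_zero_of_conj_eq_neg {z : ℂ} (h : conj z = -z) : z.re = 0 := by
  have := congrArg Complex.re h
  rw [Complex.conj_re, Complex.neg_re] at this
  linarith

lemma mul_im_eq_re_of_mul_sub_I_mul_add_one_eq_zero {lam : ℝ} {c S : ℂ}
    (h : c * ((lam : ℂ) - Complex.I * S) + 1 = 0) : lam * c.im = (c * S).re := by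
  have := congrArg Complex.im h
  simp only [Complex.add_im, Complex.mul_im, Complex.mul_re, Complex.sub_re, Complex.sub_im,
    Complex.ofReal_re, Complex.ofReal_im, Complex.I_re, Complex.I_im, Complex.one_im,
    Complex.zero_im] at this
  rw [Complex.mul_re]
  linear_combination this

lemma sum_sum_re_eq_zero_of_conj_eq_neg {ι : Type*} [Fintype ι] {M : ι → ι → ℂ}
    (hM : ∀ j k, conj (M j k) = -M k j) : ∑ j, ∑ k, (M j k).re = 0 := by
  have hre : ∀ j k, (M j k).re = -(M k j).re := fun j k => by
    rw [← Complex.neg_re, ← hM, Complex.conj_re]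
  have hsymm : ∑ j, ∑ k, (M j k).re = -∑ j, ∑ k, (M j k).re :=
    calc ∑ j, ∑ k, (M j k).re = ∑ j, ∑ k, -(M k j).re :=
          Finset.sum_congr rfl fun j _ => Finset.sum_congr rfl fun k _ => hre j k
      _ = -∑ k, ∑ j, (M k j).re := by rw [Finset.sum_comm]; simp only [Finset.sum_neg_distrib]
      _ = -∑ j, ∑ k, (M j k).re := by rw [Finset.sum_comm]
  linarith

lemma mul_im_sum_eq_zero_of_soliton_constraints {ι : Type*} [Fintype ι] {lam : ℝ} {c : ι → ℂ}
    {A : ι → ι → ℂ} (hA : ∀ j k, conj (A j k) = -A k j)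
    (hC : ∀ j, c j * ((lam : ℂ) - Complex.I * ∑ k, conj (c k) * A j k) + 1 = 0) :
    lam * (∑ j, c j).im = 0 := by
  have hskew : ∀ j k, conj (c j * conj (c k) * A j k) = -(c k * conj (c j) * A k j) := by
    intro j k
    simp only [map_mul, Complex.conj_conj, hA]
    ring
  calc lam * (∑ j, c j).im = ∑ j, lam * (c j).im := by rw [Complex.im_sum, Finset.mul_sum]
    _ = ∑ j, ∑ k, (c j * conj (c k) * A j k).re := by
      refine Finset.sum_congr rfl fun j _ => ?_
      rw [mul_im_eq_re_of_mul_sub_I_mul_add_one_eq_zero (hC j), Finset.mul_sum, Complex.re_sum]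
      simp only [mul_assoc]
    _ = 0 := sum_sum_re_eq_zero_of_conj_eq_neg hskew

theorem imm_two_soliton_constraints_general
    (δ : ℝ) (lam : ℝ) (hlam : lam ≠ 0)
    (a₁ a₂ c₁ c₂ : ℂ)
    (hc1 : c₁.im ≠ 0)
    (hC1 : c₁ * ((lam : ℂ) - Complex.I * conj c₁ * cmAlpha δ (a₁ - conj a₁ + Complex.I * (δ : ℂ))
      - Complex.I * conj c₂ * cmAlpha δ (a₁ - conj a₂ + Complex.I * (δ : ℂ))) + 1 = 0)
    (hC2 : c₂ * ((lam : ℂ) - Complex.I * conj c₁ * cmAlpha δ (a₂ - conj a₁ + Complex.I * (δ : ℂ))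
      - Complex.I * conj c₂ * cmAlpha δ (a₂ - conj a₂ + Complex.I * (δ : ℂ))) + 1 = 0) :
    (c₁ + c₂).im = 0 ∧
    lam = -(c₁ * (conj c₁ - (c₁ + c₂)) *
      cmAlpha δ (a₁ - conj a₂ + Complex.I * (δ : ℂ))).re / c₁.im := by
  set A : Fin 2 → Fin 2 → ℂ := fun j k =>
    cmAlpha δ (![a₁, a₂] j - conj (![a₁, a₂] k) + Complex.I * δ)
  have hsum : lam * (c₁ + c₂).im = 0 := by
    simpa [Fin.sum_univ_two] using mul_im_sum_eq_zero_of_soliton_constraints (c := ![c₁, c₂])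
      (A := A) (fun j k => cmAlpha_conj_sub_conj_add_I δ _ _) fun j => by
        fin_cases j
        · simp [A, Fin.sum_univ_two]; linear_combination hC1
        · simp [A, Fin.sum_univ_two]; linear_combination hC2
  have hd : (c₁ + c₂).im = 0 := (mul_eq_zero.mp hsum).resolve_left hlam
  refine ⟨hd, ?_⟩
  have h1 := mul_im_eq_re_of_mul_sub_I_mul_add_one_eq_zero (lam := lam) (c := c₁)
    (S := conj c₁ * A 0 0 + conj c₂ * A 0 1) (by simp [A]; linear_combination hC1)
  have hdiag : (c₁ * (conj c₁ * A 0 0)).re = 0 := by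
    have hA : (A 0 0).re = 0 :=
      Complex.re_eq_zero_of_conj_eq_neg (cmAlpha_conj_sub_conj_add_I δ a₁ a₁)
    rw [← mul_assoc, Complex.mul_conj, Complex.re_ofReal_mul, hA, mul_zero]
  have hconj : conj c₁ - (c₁ + c₂) = -conj c₂ := by
    rw [← Complex.conj_eq_iff_im.mpr hd, map_add]
    ring
  rw [mul_add, Complex.add_re, hdiag, zero_add] at h1
  rw [eq_div_iff hc1, hconj, h1]
  simp [A, mul_assoc]

/-- structure of solutions of the two-soliton constraints. -/
theorem imm_two_soliton_constraints
    (δ : ℝ) (hδ : 0 < δ) (lam : ℝ) (hlam : lam ≠ 0)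
    (a₁ a₂ c₁ c₂ : ℂ)
    (hstrip1 : -(3 * δ) / 2 < a₁.im ∧ a₁.im < -δ / 2)
    (hstrip2 : -(3 * δ) / 2 < a₂.im ∧ a₂.im < -δ / 2)
    (hc1 : c₁.im ≠ 0)
    (hC1 : c₁ * ((lam : ℂ) - Complex.I * conj c₁ * cmAlpha δ (a₁ - conj a₁ + Complex.I * (δ : ℂ))
      - Complex.I * conj c₂ * cmAlpha δ (a₁ - conj a₂ + Complex.I * (δ : ℂ))) + 1 = 0)
    (hC2 : c₂ * ((lam : ℂ) - Complex.I * conj c₁ * cmAlpha δ (a₂ - conj a₁ + Complex.I * (δ : ℂ))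
      - Complex.I * conj c₂ * cmAlpha δ (a₂ - conj a₂ + Complex.I * (δ : ℂ))) + 1 = 0) :
    (c₁ + c₂).im = 0 ∧
    lam = -(c₁ * (conj c₁ - (c₁ + c₂)) *
      cmAlpha δ (a₁ - conj a₂ + Complex.I * (δ : ℂ))).re / c₁.im :=
  imm_two_soliton_constraints_general δ lam hlam a₁ a₂ c₁ c₂ hc1 hC1 hC2
end
end
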